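/- arXiv:1705.04028 — 2 statements merged into one kernel-verified Lean document; each statement's English description precedes it below -/
import Mathlib

section
/- Let H be a complex Hilbert space and Θ : H → H a bounded linear operator such that Θ* is hyponormal (i.e., ‖Θf‖ ≤ ‖Θ*f‖ for all f ∈ H). Let {f_i}_{i∈I} be a Θ-frame for H with bounds A, B > 0 (I countable), let {Φ_r}_{r∈R} be a family in H (R countable), and suppose there is a bounded linear operator T : ℓ²(I) → ℓ²(R) such that T({⟨f_i, g⟩}_{i∈I}) = {⟨Φ_r, g⟩}_{r∈R} for every g ∈ H. Then {Φ_r}_{r∈R} is a Θ-frame for H if and only if there exists λ > 0 such that Σ_{r∈R} |⟨Φ_r, g⟩|² ≥ λ Σ_{i∈I} |⟨f_i, g⟩|² for all g ∈ H. -/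
open scoped ComplexInnerProductSpace

/-!
Write `u g = ‖Θ* g‖²`, `v g = ‖Θ g‖²` and `s g`, `t g` for the analysis sums of `f` and `Φ`.
Hyponormality of `Θ*` gives `v ≤ u`, the frame inequalities give `A u ≤ s ≤ B v`, and
boundedness of `T` gives `t ≤ ‖T‖² s`. With `t` sandwiched this way, a lower bound for `t`
in terms of `u` is the same as one in terms of `s`, while the upper bound `t ≤ ‖T‖² B v`
comes for free.
-/

theorem lp.norm_sq_eq_tsum {ι : Type*} {E : ι → Type*} [∀ i, NormedAddCommGroup (E i)]
    (x : lp E 2) : ‖x‖ ^ 2 = ∑' i, ‖x i‖ ^ 2 := by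
  exact_mod_cast lp.norm_rpow_eq_tsum (p := 2) (by norm_num) x

theorem lp.tsum_norm_sq_apply_le {𝕜 ι κ : Type*} [NontriviallyNormedField 𝕜]
    {E : ι → Type*} {F : κ → Type*} [∀ i, NormedAddCommGroup (E i)] [∀ i, NormedSpace 𝕜 (E i)]
    [∀ k, NormedAddCommGroup (F k)] [∀ k, NormedSpace 𝕜 (F k)]
    (T : lp E 2 →L[𝕜] lp F 2) (x : lp E 2) :
    ∑' k, ‖T x k‖ ^ 2 ≤ ‖T‖ ^ 2 * ∑' i, ‖x i‖ ^ 2 := by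
  rw [← lp.norm_sq_eq_tsum, ← lp.norm_sq_eq_tsum, ← mul_pow]
  exact pow_le_pow_left₀ (norm_nonneg _) (T.le_opNorm x) 2

theorem exists_bounds_iff_exists_lower_bound_of_sandwich {X : Type*} {u v s t : X → ℝ}
    {A B C : ℝ} (hA : 0 < A) (hB : 0 < B) (hC : 0 ≤ C) (hvu : ∀ x, v x ≤ u x)
    (hs : ∀ x, A * u x ≤ s x ∧ s x ≤ B * v x) (hs₀ : ∀ x, 0 ≤ s x)
    (ht : ∀ x, t x ≤ C * s x) :
    (∃ A' B' : ℝ, 0 < A' ∧ 0 < B' ∧ ∀ x, A' * u x ≤ t x ∧ t x ≤ B' * v x) ↔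
      ∃ lam : ℝ, 0 < lam ∧ ∀ x, lam * s x ≤ t x := by
  constructor
  · rintro ⟨A', _, hA', -, hbounds⟩
    refine ⟨A' / B, by positivity, fun x => ?_⟩
    calc A' / B * s x ≤ A' / B * (B * u x) := by
          gcongr
          exact (hs x).2.trans (by gcongr; exact hvu x)
      _ = A' * u x := by field_simp
      _ ≤ t x := (hbounds x).1
  · rintro ⟨lam, hlam, hlower⟩
    refine ⟨lam * A, (C + 1) * B, by positivity, by positivity, fun x => ⟨?_, ?_⟩⟩
    · calc lam * A * u x = lam * (A * u x) := mul_assoc ..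
        _ ≤ lam * s x := by gcongr; exact (hs x).1
        _ ≤ t x := hlower x
    · calc t x ≤ C * s x := ht x
        _ ≤ (C + 1) * s x := by linarith [hs₀ x]
        _ ≤ (C + 1) * (B * v x) := by gcongr; exact (hs x).2
        _ = (C + 1) * B * v x := by ring

theorem linear_combination_theta_frame_iff_general
    {H : Type*} [NormedAddCommGroup H] [InnerProductSpace ℂ H] [CompleteSpace H]
    {I R : Type*}
    (Θ : H →L[ℂ] H)
    (hhypo : ∀ g : H, ‖Θ g‖ ≤ ‖ContinuousLinearMap.adjoint Θ g‖)
    (f : I → H) (A B : ℝ) (hA : 0 < A) (hB : 0 < B)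
    (hframe : ∀ g : H, A * ‖ContinuousLinearMap.adjoint Θ g‖ ^ 2 ≤ ∑' i, ‖⟪f i, g⟫‖ ^ 2 ∧
      ∑' i, ‖⟪f i, g⟫‖ ^ 2 ≤ B * ‖Θ g‖ ^ 2)
    (Φ : R → H)
    (T : lp (fun _ : I => ℂ) 2 →L[ℂ] lp (fun _ : R => ℂ) 2)
    (hmemI : ∀ g : H, Memℓp (fun i => ⟪f i, g⟫) 2)
    (hmemR : ∀ g : H, Memℓp (fun r => ⟪Φ r, g⟫) 2)
    (hT : ∀ g : H, T ⟨fun i => ⟪f i, g⟫, hmemI g⟩ = ⟨fun r => ⟪Φ r, g⟫, hmemR g⟩) :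
    (∃ A' B' : ℝ, 0 < A' ∧ 0 < B' ∧
        ∀ g : H, A' * ‖ContinuousLinearMap.adjoint Θ g‖ ^ 2 ≤ ∑' r, ‖⟪Φ r, g⟫‖ ^ 2 ∧
          ∑' r, ‖⟪Φ r, g⟫‖ ^ 2 ≤ B' * ‖Θ g‖ ^ 2) ↔
      ∃ lam : ℝ, 0 < lam ∧
        ∀ g : H, lam * ∑' i, ‖⟪f i, g⟫‖ ^ 2 ≤ ∑' r, ‖⟪Φ r, g⟫‖ ^ 2 := by
  have hΦ_le (g : H) : ∑' r, ‖⟪Φ r, g⟫‖ ^ 2 ≤ ‖T‖ ^ 2 * ∑' i, ‖⟪f i, g⟫‖ ^ 2 := by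
    have := lp.tsum_norm_sq_apply_le T ⟨_, hmemI g⟩
    rwa [hT g] at this
  exact exists_bounds_iff_exists_lower_bound_of_sandwich hA hB (sq_nonneg ‖T‖)
    (fun g => pow_le_pow_left₀ (norm_nonneg _) (hhypo g) 2) hframe
    (fun g => tsum_nonneg fun i => sq_nonneg _) hΦ_le

/-- Let `Θ*` be hyponormal, `{f_i}` a `Θ`-frame with bounds `A, B`,
`{Φ_r}` a family in `H`, and `T : ℓ²(I) → ℓ²(R)` a bounded operator with
`T({⟨f_i, g⟩}_i) = {⟨Φ_r, g⟩}_r` for every `g ∈ H`. Then `{Φ_r}` is a `Θ`-frame if and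
only if there is `λ > 0` with `∑_r |⟨Φ_r, g⟩|² ≥ λ ∑_i |⟨f_i, g⟩|²` for all `g ∈ H`. -/
theorem linear_combination_theta_frame_iff
    {H : Type*} [NormedAddCommGroup H] [InnerProductSpace ℂ H] [CompleteSpace H]
    {I R : Type*} [Countable I] [Countable R]
    (Θ : H →L[ℂ] H)
    (hhypo : ∀ g : H, ‖Θ g‖ ≤ ‖ContinuousLinearMap.adjoint Θ g‖)
    (f : I → H) (A B : ℝ) (hA : 0 < A) (hB : 0 < B)
    (hframe : ∀ g : H, A * ‖ContinuousLinearMap.adjoint Θ g‖ ^ 2 ≤ ∑' i, ‖⟪f i, g⟫‖ ^ 2 ∧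
      ∑' i, ‖⟪f i, g⟫‖ ^ 2 ≤ B * ‖Θ g‖ ^ 2)
    (Φ : R → H)
    (T : lp (fun _ : I => ℂ) 2 →L[ℂ] lp (fun _ : R => ℂ) 2)
    (hmemI : ∀ g : H, Memℓp (fun i => ⟪f i, g⟫) 2)
    (hmemR : ∀ g : H, Memℓp (fun r => ⟪Φ r, g⟫) 2)
    (hT : ∀ g : H, T ⟨fun i => ⟪f i, g⟫, hmemI g⟩ = ⟨fun r => ⟪Φ r, g⟫, hmemR g⟩) :
    (∃ A' B' : ℝ, 0 < A' ∧ 0 < B' ∧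
        ∀ g : H, A' * ‖ContinuousLinearMap.adjoint Θ g‖ ^ 2 ≤ ∑' r, ‖⟪Φ r, g⟫‖ ^ 2 ∧
          ∑' r, ‖⟪Φ r, g⟫‖ ^ 2 ≤ B' * ‖Θ g‖ ^ 2) ↔
      ∃ lam : ℝ, 0 < lam ∧
        ∀ g : H, lam * ∑' i, ‖⟪f i, g⟫‖ ^ 2 ≤ ∑' r, ‖⟪Φ r, g⟫‖ ^ 2 :=
  linear_combination_theta_frame_iff_general Θ hhypo f A B hA hB hframe Φ T hmemI hmemR hT
end

section
/- Let H be a complex Hilbert space and Θ : H → H a bounded linear operator whose range R(Θ) is closed. Let {f_i}_{i∈I} (I countable) be a Θ-frame for H with lower bound A > 0, i.e., A‖Θ*f‖² ≤ Σ_{i∈I} |⟨f, f_i⟩|² for all f ∈ H. Then there exists a constant c > 0 such that Σ_{i∈I} |⟨f, f_i⟩|² ≥ c‖f‖² for all f ∈ R(Θ); equivalently, the frame operator S, defined by Sf = Σ_{i∈I} ⟨f, f_i⟩ f_i, satisfies ⟨Sf, f⟩ ≥ c‖f‖² for all f ∈ R(Θ). -/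
/-!
A closed range makes the corestriction of `Θ` onto `R(Θ)` surjective, so by the open mapping
theorem every `g ∈ R(Θ)` has a preimage `x` with `‖x‖ ≤ C‖g‖`. Then
`‖g‖² = ⟪Θx, g⟫ = ⟪x, Θ*g⟫ ≤ C‖g‖‖Θ*g‖`, i.e. `Θ*` is bounded below on `R(Θ)`, and the lower
`Θ`-frame bound turns this into `(A / C²)‖g‖² ≤ ∑ |⟪g, f_i⟫|²`.
-/

open scoped ComplexInnerProductSpace

namespace ContinuousLinearMap

theorem exists_preimage_norm_le_of_isClosed_range {𝕜 E F : Type*} [NontriviallyNormedField 𝕜]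
    [NormedAddCommGroup E] [NormedSpace 𝕜 E] [CompleteSpace E]
    [NormedAddCommGroup F] [NormedSpace 𝕜 F] [CompleteSpace F]
    (T : E →L[𝕜] F) (hT : IsClosed (Set.range T)) :
    ∃ C > 0, ∀ y ∈ Set.range T, ∃ x, T x = y ∧ ‖x‖ ≤ C * ‖y‖ := by
  let R := LinearMap.range (T : E →ₗ[𝕜] F)
  have : CompleteSpace R := hT.completeSpace_coe
  let T' : E →L[𝕜] R := T.codRestrict R (LinearMap.mem_range_self _)
  have hT' : Function.Surjective T' := by
    rintro ⟨_, x, rfl⟩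
    exact ⟨x, rfl⟩
  obtain ⟨C, hC, hpre⟩ := T'.exists_preimage_norm_le hT'
  refine ⟨C, hC, ?_⟩
  rintro _ ⟨x₀, rfl⟩
  obtain ⟨x, hx, hxn⟩ := hpre ⟨T x₀, x₀, rfl⟩
  exact ⟨x, congrArg Subtype.val hx, hxn⟩

theorem exists_norm_le_mul_norm_adjoint_of_isClosed_range {𝕜 E F : Type*} [RCLike 𝕜]
    [NormedAddCommGroup E] [InnerProductSpace 𝕜 E] [CompleteSpace E]
    [NormedAddCommGroup F] [InnerProductSpace 𝕜 F] [CompleteSpace F]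
    (T : E →L[𝕜] F) (hT : IsClosed (Set.range T)) :
    ∃ C > 0, ∀ y ∈ Set.range T, ‖y‖ ≤ C * ‖adjoint T y‖ := by
  obtain ⟨C, hC, hpre⟩ := T.exists_preimage_norm_le_of_isClosed_range hT
  refine ⟨C, hC, fun y hy ↦ ?_⟩
  obtain ⟨x, rfl, hx⟩ := hpre y hy
  have hbound : ‖T x‖ ^ 2 ≤ C * ‖adjoint T (T x)‖ * ‖T x‖ :=
    calc ‖T x‖ ^ 2 = ‖inner 𝕜 x (adjoint T (T x))‖ := by
          rw [adjoint_inner_right, inner_self_eq_norm_sq_to_K, norm_pow, RCLike.norm_ofReal,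
            abs_norm]
      _ ≤ ‖x‖ * ‖adjoint T (T x)‖ := norm_inner_le_norm _ _
      _ ≤ C * ‖T x‖ * ‖adjoint T (T x)‖ := by gcongr
      _ = C * ‖adjoint T (T x)‖ * ‖T x‖ := by ring
  rcases (norm_nonneg (T x)).eq_or_lt with h0 | hpos
  · rw [← h0]
    positivity
  · rw [sq] at hbound
    exact le_of_mul_le_mul_right hbound hpos

end ContinuousLinearMap

theorem theta_frame_lower_bound_on_range_general
    {H : Type*} [NormedAddCommGroup H] [InnerProductSpace ℂ H] [CompleteSpace H]
    {I : Type*}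
    (Θ : H →L[ℂ] H) (hclosed : IsClosed (Set.range ⇑Θ))
    (f : I → H) (A : ℝ) (hA : 0 < A)
    (hlow : ∀ g : H, A * ‖ContinuousLinearMap.adjoint Θ g‖ ^ 2 ≤ ∑' i, ‖⟪g, f i⟫‖ ^ 2) :
    ∃ c : ℝ, 0 < c ∧ ∀ g ∈ Set.range ⇑Θ, c * ‖g‖ ^ 2 ≤ ∑' i, ‖⟪g, f i⟫‖ ^ 2 := by
  obtain ⟨C, hC, hbelow⟩ := Θ.exists_norm_le_mul_norm_adjoint_of_isClosed_range hclosed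
  refine ⟨A / C ^ 2, by positivity, fun g hg ↦ ?_⟩
  have hsq : ‖g‖ ^ 2 ≤ C ^ 2 * ‖ContinuousLinearMap.adjoint Θ g‖ ^ 2 := by
    rw [← mul_pow]
    exact pow_le_pow_left₀ (norm_nonneg g) (hbelow g hg) 2
  calc A / C ^ 2 * ‖g‖ ^ 2 ≤ A / C ^ 2 * (C ^ 2 * ‖ContinuousLinearMap.adjoint Θ g‖ ^ 2) := by
        gcongr
    _ = A * ‖ContinuousLinearMap.adjoint Θ g‖ ^ 2 := by field_simp
    _ ≤ ∑' i, ‖⟪g, f i⟫‖ ^ 2 := hlow g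

/-- If `Θ` has closed range and `{f_i}` is a `Θ`-frame with lower bound
`A > 0` (i.e. `A‖Θ*f‖² ≤ ∑_i |⟨f, f_i⟩|²` for all `f`), then there is `c > 0` with
`∑_i |⟨f, f_i⟩|² ≥ c‖f‖²` for all `f ∈ R(Θ)`; equivalently the frame operator `S`
satisfies `⟨Sf, f⟩ ≥ c‖f‖²` on `R(Θ)`. -/
theorem theta_frame_lower_bound_on_range
    {H : Type*} [NormedAddCommGroup H] [InnerProductSpace ℂ H] [CompleteSpace H]
    {I : Type*} [Countable I]
    (Θ : H →L[ℂ] H) (hclosed : IsClosed (Set.range ⇑Θ))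
    (f : I → H) (A : ℝ) (hA : 0 < A)
    (hlow : ∀ g : H, A * ‖ContinuousLinearMap.adjoint Θ g‖ ^ 2 ≤ ∑' i, ‖⟪g, f i⟫‖ ^ 2) :
    ∃ c : ℝ, 0 < c ∧ ∀ g ∈ Set.range ⇑Θ, c * ‖g‖ ^ 2 ≤ ∑' i, ‖⟪g, f i⟫‖ ^ 2 :=
  theta_frame_lower_bound_on_range_general Θ hclosed f A hA hlow
end
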